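/- arXiv:1309.1835 — 7 statements merged into one kernel-verified Lean document; each statement's English description precedes it below -/
import Mathlib

section
/- Let G be a finite simple graph that is claw-free and co-claw-free. If G contains a triangle (a 3-element clique) and an independent set of 3 vertices that is disjoint from that triangle, then G is isomorphic to A_6 or to the complement of A_6. -/
/-!
Let `t` be the triangle and `s` the independent triple. A claw centred at a vertex of `t`, or a
claw of `Gᶜ` centred at a vertex of `s`, would appear unless the edges between `t` and `s` form
a perfect matching or the complement of one. Passing to `Gᶜ` exchanges `t` and `s` and turns a
co-matching into a matching, so it suffices to treat a matching, where `t ∪ s` induces the net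
`A₆ᶜ`. There is no further vertex `v`: it has a neighbour `t i` (else `t` and `v` form a
co-claw), hence is adjacent to `s i` and, through the triangle `t i, s i, v`, to all of `s`,
which gives a claw centred at `v`.
-/

open SimpleGraph

/-- The claw `K_{1,3}`. -/
def claw : SimpleGraph (Fin 1 ⊕ Fin 3) := completeBipartiteGraph (Fin 1) (Fin 3)
/-- The graph `A₆`: a triangle `3 4 5` (playing the role of `a' b' c'`) each of whose edges
is bounded by a further triangle via the vertices `0 1 2` (playing the role of `a b c`). -/
def A6 : SimpleGraph (Fin 6) := SimpleGraph.fromRel (fun x y =>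
  (x = 3 ∧ y = 4) ∨ (x = 4 ∧ y = 5) ∨ (x = 5 ∧ y = 3) ∨
  (x = 0 ∧ y = 4) ∨ (x = 0 ∧ y = 5) ∨ (x = 1 ∧ y = 3) ∨
  (x = 1 ∧ y = 5) ∨ (x = 2 ∧ y = 3) ∨ (x = 2 ∧ y = 4))

open Function

variable {V W : Type*} {G : SimpleGraph V}

lemma isIndContained_of_adj_of_compl_adj {H : SimpleGraph W} (f : W → V)
    (hadj : ∀ ⦃a b⦄, H.Adj a b → G.Adj (f a) (f b))
    (hnadj : ∀ ⦃a b⦄, Hᶜ.Adj a b → Gᶜ.Adj (f a) (f b)) : H ⊴ G := by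
  have hinj : Injective f := fun a b hab => by
    by_contra hne
    by_cases h : H.Adj a b
    · exact (hadj h).ne hab
    · exact (hnadj ⟨hne, h⟩).ne hab
  refine ⟨⟨⟨f, hinj⟩, fun {a b} => ⟨fun h => ?_, fun h => hadj h⟩⟩⟩
  by_contra hab
  exact (hnadj ⟨by rintro rfl; exact G.irrefl h, hab⟩).2 h

lemma claw_isIndContained {u x y z : V} (hx : G.Adj u x) (hy : G.Adj u y) (hz : G.Adj u z)
    (hxy : Gᶜ.Adj x y) (hxz : Gᶜ.Adj x z) (hyz : Gᶜ.Adj y z) : claw ⊴ G := by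
  refine isIndContained_of_adj_of_compl_adj (Sum.elim (fun _ => u) ![x, y, z]) ?_ ?_ <;>
    rintro (i | i) (j | j) h <;> fin_cases i <;> fin_cases j <;>
    simp_all [claw, G.adj_comm, eq_comm]

def ClawFree (G : SimpleGraph V) : Prop := ¬ claw ⊴ G

lemma clawFree_compl_iff : ClawFree Gᶜ ↔ ¬ clawᶜ ⊴ G := by
  rw [ClawFree, ← compl_isIndContained_compl, compl_compl]

lemma nonempty_iso_of_compl {H : SimpleGraph W} (e : Gᶜ ≃g Hᶜ) : Nonempty (G ≃g H) :=
  ⟨⟨e.toEquiv, (Embedding.complEquiv.symm e.toEmbedding).map_rel_iff⟩⟩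

namespace ClawFree

variable (hG : ClawFree G)
include hG

lemma adj_or_adj {u x y w : V} (hx : G.Adj u x) (hy : G.Adj u y) (hw : G.Adj u w)
    (hxy : Gᶜ.Adj x y) (hwx : w ≠ x) (hwy : w ≠ y) : G.Adj w x ∨ G.Adj w y := by
  by_contra! h
  exact hG (claw_isIndContained hx hy hw hxy ⟨hwx.symm, fun h' => h.1 h'.symm⟩
    ⟨hwy.symm, fun h' => h.2 h'.symm⟩)

lemma exists_not_adj {s : Fin 3 → V} (hs : Pairwise (Gᶜ.Adj on s)) (v : V) :
    ∃ j, ¬ G.Adj v (s j) := by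
  by_contra! h
  exact hG (claw_isIndContained (h 0) (h 1) (h 2) (hs (by decide)) (hs (by decide))
    (hs (by decide)))

end ClawFree

lemma exists_perm_forall_iff_eq {α : Type*} [Finite α] {R : α → α → Prop}
    (hex : ∀ j, ∃ i, R i j) (huniq : ∀ i j j', R i j → R i j' → j = j') :
    ∃ σ : Equiv.Perm α, ∀ i j, R (σ i) j ↔ i = j := by
  choose f hf using hex
  have hinj : Injective f := fun j j' h => huniq _ _ _ (hf j) (h ▸ hf j')
  refine ⟨Equiv.ofBijective f hinj.bijective_of_finite, fun i j => ⟨fun hij => ?_, ?_⟩⟩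
  · exact huniq _ _ _ (hf i) hij
  · rintro rfl
    exact hf i

structure IsTriangleIndepPair (G : SimpleGraph V) (t s : Fin 3 → V) : Prop where
  pairwise_adj : Pairwise (G.Adj on t)
  pairwise_compl_adj : Pairwise (Gᶜ.Adj on s)
  ne : ∀ i j, t i ≠ s j

namespace IsTriangleIndepPair

variable {t s : Fin 3 → V} (h : IsTriangleIndepPair G t s)
include h

lemma symm : IsTriangleIndepPair Gᶜ s t :=
  ⟨h.pairwise_compl_adj, by rw [compl_compl]; exact h.pairwise_adj, fun j i => (h.ne i j).symm⟩

lemma comp {σ : Fin 3 → Fin 3} (hσ : Injective σ) : IsTriangleIndepPair G (t ∘ σ) s :=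
  ⟨h.pairwise_adj.comp_of_injective hσ, h.pairwise_compl_adj, fun i j => h.ne (σ i) j⟩

lemma injective : Injective t :=
  fun _ _ hij => of_not_not fun hne => (h.pairwise_adj hne).ne hij

lemma compl_adj_iff {i j : Fin 3} : Gᶜ.Adj (s j) (t i) ↔ ¬ G.Adj (t i) (s j) := by
  rw [SimpleGraph.compl_adj, G.adj_comm]
  exact and_iff_right (h.ne i j).symm

lemma exists_adj (hGc : ClawFree Gᶜ) (j : Fin 3) : ∃ i, G.Adj (t i) (s j) := by
  obtain ⟨i, hi⟩ := hGc.exists_not_adj h.symm.pairwise_compl_adj (s j)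
  exact ⟨i, not_not.1 (h.compl_adj_iff.not.1 hi)⟩

lemma false_of_adj_of_compl_adj (hG : ClawFree G) (hGc : ClawFree Gᶜ) {i i₁ i₂ j j' : Fin 3}
    (hj : j ≠ j') (hij : G.Adj (t i) (s j)) (hij' : G.Adj (t i) (s j'))
    (hi : i₁ ≠ i₂) (h₁ : Gᶜ.Adj (s j) (t i₁)) (h₂ : Gᶜ.Adj (s j) (t i₂)) : False := by
  -- Claws at `t i` join `t i₁` and `t i₂` to `s j'`; then `s j` centres a claw of `Gᶜ`.
  have key : ∀ l, Gᶜ.Adj (s j) (t l) → G.Adj (t l) (s j') := fun l hl =>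
    (hG.adj_or_adj hij hij' (h.pairwise_adj fun e => h.compl_adj_iff.1 (e ▸ hl) hij)
      (h.pairwise_compl_adj hj) (h.ne l j) (h.ne l j')).resolve_left (h.compl_adj_iff.1 hl)
  have htt : Gᶜᶜ.Adj (t i₁) (t i₂) := by rw [compl_compl]; exact h.pairwise_adj hi
  rcases hGc.adj_or_adj h₁ h₂ (h.pairwise_compl_adj hj) htt (h.ne i₁ j').symm
    (h.ne i₂ j').symm with e | e
  · exact h.compl_adj_iff.1 e (key i₁ h₁)
  · exact h.compl_adj_iff.1 e (key i₂ h₂)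

lemma false_of_adj_of_adj_of_compl_adj (hG : ClawFree G) (hGc : ClawFree Gᶜ)
    {i i₁ i₂ j j₁ j₂ : Fin 3} (hj : j₁ ≠ j₂) (h₁ : G.Adj (t i) (s j₁)) (h₂ : G.Adj (t i) (s j₂))
    (hij : G.Adj (t i) (s j)) (hi : i₁ ≠ i₂) (h₁' : Gᶜ.Adj (s j) (t i₁))
    (h₂' : Gᶜ.Adj (s j) (t i₂)) : False := by
  by_cases hj₁ : j = j₁
  · subst hj₁
    exact h.false_of_adj_of_compl_adj hG hGc hj hij h₂ hi h₁' h₂'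
  by_cases hj₂ : j = j₂
  · subst hj₂
    exact h.false_of_adj_of_compl_adj hG hGc hj.symm hij h₁ hi h₁' h₂'
  -- `t i` is not adjacent to all of `s`, so `j` is `j₁` or `j₂`.
  obtain ⟨k, hk⟩ := hG.exists_not_adj h.pairwise_compl_adj (t i)
  have hcover : ∀ a b c d : Fin 3, a ≠ b → a ≠ c → b ≠ c → d = a ∨ d = b ∨ d = c := by decide
  rcases hcover j j₁ j₂ k hj₁ hj₂ hj with rfl | rfl | rfl <;> contradiction

lemma forall_eq_or_forall_eq (hG : ClawFree G) (hGc : ClawFree Gᶜ) :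
    (∀ i j j', G.Adj (t i) (s j) → G.Adj (t i) (s j') → j = j') ∨
      ∀ j i i', Gᶜ.Adj (s j) (t i) → Gᶜ.Adj (s j) (t i') → i = i' := by
  by_contra! ⟨⟨i, j₁, j₂, h₁, h₂, hj⟩, ⟨j, i₁, i₂, h₁', h₂', hi⟩⟩
  by_cases hij : G.Adj (t i) (s j)
  · exact h.false_of_adj_of_adj_of_compl_adj hG hGc hj h₁ h₂ hij hi h₁' h₂'
  -- The first case again, in `Gᶜ` and with the roles of `t` and `s` exchanged.
  · exact h.symm.false_of_adj_of_adj_of_compl_adj hGc (by rwa [compl_compl]) hi h₁' h₂'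
      (h.compl_adj_iff.2 hij) hj (by rwa [compl_compl]) (by rwa [compl_compl])

lemma exists_perm_adj_iff_eq_or (hG : ClawFree G) (hGc : ClawFree Gᶜ) :
    (∃ σ : Equiv.Perm (Fin 3), ∀ i j, G.Adj (t (σ i)) (s j) ↔ i = j) ∨
      ∃ σ : Equiv.Perm (Fin 3), ∀ i j, Gᶜ.Adj (s (σ i)) (t j) ↔ i = j :=
  (h.forall_eq_or_forall_eq hG hGc).imp (exists_perm_forall_iff_eq (h.exists_adj hGc))
    (exists_perm_forall_iff_eq (h.symm.exists_adj (by rwa [compl_compl])))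

section Matching

variable (hadj : ∀ i j, G.Adj (t i) (s j) ↔ i = j)
include hadj

lemma adj_right_of_adj_left (hG : ClawFree G) (hGc : ClawFree Gᶜ) {v : V} (hvt : ∀ i, t i ≠ v)
    (hvs : ∀ j, s j ≠ v) {i : Fin 3} (hi : G.Adj v (t i)) : G.Adj v (s i) := by
  -- Otherwise claws at `t i` join `v` to all of `t`, and `s i` misses the triangle `v, t k, t k'`.
  by_contra hn
  have hsv : Gᶜ.Adj (s i) v := ⟨hvs i, fun e => hn e.symm⟩
  have hvk : ∀ k, k ≠ i → G.Adj v (t k) := fun k hk =>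
    ((hG.adj_or_adj ((hadj i i).2 rfl) hi.symm (h.pairwise_adj hk.symm) hsv (h.ne k i)
      (hvt k)).resolve_left ((hadj k i).not.2 hk)).symm
  obtain ⟨k, k', hk, hk', hkk'⟩ :=
    (by decide : ∀ i : Fin 3, ∃ k k' : Fin 3, k ≠ i ∧ k' ≠ i ∧ k ≠ k') i
  have htt : Gᶜᶜ.Adj (t k) (t k') := by rw [compl_compl]; exact h.pairwise_adj hkk'
  rcases hGc.adj_or_adj (h.compl_adj_iff.2 ((hadj k i).not.2 hk))
    (h.compl_adj_iff.2 ((hadj k' i).not.2 hk')) hsv htt (hvt k).symm (hvt k').symm with e | e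
  · exact e.2 (hvk k hk)
  · exact e.2 (hvk k' hk')

lemma adj_right_of_adj_of_adj (hGc : ClawFree Gᶜ) {v : V} (hvt : ∀ i, t i ≠ v) (hvs : ∀ j, s j ≠ v)
    {i : Fin 3} (hi : G.Adj v (t i)) (hsi : G.Adj v (s i)) (j : Fin 3) : G.Adj v (s j) := by
  -- Otherwise `s j` misses the triangle `t i, s i, v`.
  by_contra hn
  obtain rfl | hji := eq_or_ne j i
  · exact hn hsi
  have hts : Gᶜᶜ.Adj (t i) (s i) := by rw [compl_compl]; exact (hadj i i).2 rfl
  rcases hGc.adj_or_adj (h.compl_adj_iff.2 ((hadj i j).not.2 hji.symm))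
    (h.pairwise_compl_adj hji) ⟨hvs j, fun e => hn e.symm⟩ hts (hvt i).symm (hvs i).symm
    with e | e
  · exact e.2 hi
  · exact e.2 hsi

lemma exists_eq_or_exists_eq (hG : ClawFree G) (hGc : ClawFree Gᶜ) (v : V) :
    (∃ i, t i = v) ∨ ∃ j, s j = v := by
  by_contra! ⟨hvt, hvs⟩
  obtain ⟨i, hi⟩ := hGc.exists_not_adj h.symm.pairwise_compl_adj v
  have hi : G.Adj v (t i) := of_not_not fun hn => hi ⟨(hvt i).symm, hn⟩
  obtain ⟨j, hj⟩ := hG.exists_not_adj h.pairwise_compl_adj v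
  exact hj (h.adj_right_of_adj_of_adj hadj hGc hvt hvs hi
    (h.adj_right_of_adj_left hadj hG hGc hvt hvs hi) j)

/-- In `A6ᶜ`, `0 1 2` is a triangle and `i + 3` is a pendant vertex at `i`. -/
lemma adj_append_iff (a b : Fin (3 + 3)) :
    G.Adj (Fin.append t s a) (Fin.append t s b) ↔ A6ᶜ.Adj a b := by
  have htt : ∀ i j, G.Adj (t i) (t j) ↔ i ≠ j :=
    fun i j => ⟨fun hij e => G.irrefl (e ▸ hij), fun hij => h.pairwise_adj hij⟩
  have hss : ∀ i j, ¬ G.Adj (s i) (s j) := fun i j hij =>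
    (h.pairwise_compl_adj fun e => G.irrefl (e ▸ hij)).2 hij
  refine Fin.addCases (fun i => ?_) (fun i => ?_) a <;>
    refine Fin.addCases (fun j => ?_) (fun j => ?_) b <;>
    simp only [Fin.append_left, Fin.append_right, htt, hadj, G.adj_comm (s _) (t _), hss,
      SimpleGraph.compl_adj, A6, fromRel_adj] <;>
    revert i j <;> decide

lemma nonempty_iso_compl_A6 (hG : ClawFree G) (hGc : ClawFree Gᶜ) : Nonempty (G ≃g A6ᶜ) := by
  have hsurj : Surjective (Fin.append t s) := fun v => by
    rcases h.exists_eq_or_exists_eq hadj hG hGc v with ⟨i, rfl⟩ | ⟨j, rfl⟩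
    · exact ⟨Fin.castAdd 3 i, Fin.append_left t s i⟩
    · exact ⟨Fin.natAdd 3 j, Fin.append_right t s j⟩
  have hinj : Injective (Fin.append t s) :=
    Fin.append_injective_iff.2 ⟨h.injective, h.symm.injective, h.ne⟩
  exact ⟨(RelIso.mk (Equiv.ofBijective _ ⟨hinj, hsurj⟩) (h.adj_append_iff hadj _ _)).symm⟩

end Matching

end IsTriangleIndepPair

lemma exists_pairwise_adj_of_isClique {T : Finset V} (hcard : T.card = 3)
    (hT : G.IsClique (T : Set V)) : ∃ t : Fin 3 → V, Pairwise (G.Adj on t) ∧ ∀ i, t i ∈ T := by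
  let e := (Finset.equivFinOfCardEq hcard).symm
  exact ⟨fun i => e i, fun i j hij => hT (e i).2 (e j).2 fun h => hij (e.injective (Subtype.ext h)),
    fun i => (e i).2⟩

theorem stmt_1_general {V : Type} (G : SimpleGraph V)
    (hclaw : ¬ Nonempty (claw ↪g G)) (hcoclaw : ¬ Nonempty (clawᶜ ↪g G))
    (t s : Finset V) (htcard : t.card = 3) (htclique : G.IsClique ↑t)
    (hscard : s.card = 3) (hsindep : Gᶜ.IsClique ↑s) (hdisj : Disjoint s t) :
    Nonempty (G ≃g A6) ∨ Nonempty (G ≃g A6ᶜ) := by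
  have hG : ClawFree G := hclaw
  have hGc : ClawFree Gᶜ := clawFree_compl_iff.2 hcoclaw
  obtain ⟨a, ha, hat⟩ := exists_pairwise_adj_of_isClique htcard htclique
  obtain ⟨b, hb, hbs⟩ := exists_pairwise_adj_of_isClique hscard hsindep
  have h : IsTriangleIndepPair G a b :=
    ⟨ha, hb, fun i j e => Finset.disjoint_left.1 hdisj (hbs j) (e ▸ hat i)⟩
  rcases h.exists_perm_adj_iff_eq_or hG hGc with ⟨σ, hσ⟩ | ⟨σ, hσ⟩
  · exact .inr ((h.comp σ.injective).nonempty_iso_compl_A6 hσ hG hGc)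
  · obtain ⟨e⟩ := (h.symm.comp σ.injective).nonempty_iso_compl_A6 hσ hGc (by rwa [compl_compl])
    exact .inl (nonempty_iso_of_compl e)

/-- If a finite claw-free and co-claw-free graph contains a triangle and an independent set
of 3 vertices disjoint from it, then it is isomorphic to `A₆` or to its complement. -/
theorem stmt_1 {V : Type} [Fintype V] (G : SimpleGraph V)
    (hclaw : ¬ Nonempty (claw ↪g G)) (hcoclaw : ¬ Nonempty (clawᶜ ↪g G))
    (t s : Finset V) (htcard : t.card = 3) (htclique : G.IsClique ↑t)
    (hscard : s.card = 3) (hsindep : Gᶜ.IsClique ↑s) (hdisj : Disjoint s t) :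
    Nonempty (G ≃g A6) ∨ Nonempty (G ≃g A6ᶜ) :=
  stmt_1_general G hclaw hcoclaw t s htcard htclique hscard hsindep hdisj
end

section
/- Let G and G' be two finite simple graphs on the same vertex set having the same 3-element homogeneous subsets, and let U be the Boolean sum of G and G'. If U is disconnected, then U contains no triangle (no 3-element cycle). -/
open SimpleGraph

/-- The Boolean sum `G ∔ G'`: edges are the symmetric difference of the edge sets. -/
def booleanSum {V : Type*} (G G' : SimpleGraph V) : SimpleGraph V where
  Adj x y := (G.Adj x y ∧ ¬ G'.Adj x y) ∨ (G'.Adj x y ∧ ¬ G.Adj x y)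
  symm := by
    constructor
    rintro x y (⟨h1, h2⟩ | ⟨h1, h2⟩)
    · exact Or.inl ⟨h1.symm, fun h => h2 h.symm⟩
    · exact Or.inr ⟨h1.symm, fun h => h2 h.symm⟩
  loopless := by
    constructor
    rintro x (⟨h, -⟩ | ⟨h, -⟩)
    · exact G.irrefl h
    · exact G'.irrefl h
/-- Two graphs on the same vertex set have the same 3-element homogeneous subsets:
a 3-element set is a clique or an independent set of `G` iff it is one of `G'`. -/
def SameHomog3 {V : Type*} (G G' : SimpleGraph V) : Prop :=
  ∀ s : Finset V, s.card = 3 →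
    ((G.IsClique ↑s ∨ Gᶜ.IsClique ↑s) ↔ (G'.IsClique ↑s ∨ G'ᶜ.IsClique ↑s))

/-!
Let `abc` be a triangle of `U = G ∔ G'`. If a vertex `z` is `U`-adjacent to neither end of a
side `ab`, then `G` and `G'` agree on `az` and `bz` and disagree on `ab`; as `{a, b, z}` is
homogeneous in `G` iff it is in `G'`, `G` must contain exactly one of `az`, `bz`. A vertex
`U`-adjacent to none of `a, b, c` would thus have pairwise different `G`-adjacencies to three
vertices, which is impossible. So the triangle dominates `U`, and `U` is connected.
-/

theorem SimpleGraph.IsClique.connected_of_dominating {V : Type*} {G : SimpleGraph V}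
    {s : Set V} (hs : G.IsClique s) {a : V} (ha : a ∈ s)
    (hdom : ∀ v, v ∈ s ∨ ∃ u ∈ s, G.Adj u v) : G.Connected := by
  have reach_of_mem : ∀ u ∈ s, G.Reachable a u := fun u hu => by
    by_cases hau : a = u
    · exact hau ▸ Reachable.refl a
    · exact (hs ha hu hau).reachable
  have reach : ∀ v, G.Reachable a v := fun v => by
    rcases hdom v with hv | ⟨u, hu, huv⟩
    · exact reach_of_mem v hv
    · exact (reach_of_mem u hu).trans huv.reachable
  have : Nonempty V := ⟨a⟩
  exact ⟨fun u v => (reach u).symm.trans (reach v)⟩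

section

variable {V : Type*} {G G' : SimpleGraph V}

theorem booleanSum_adj {x y : V} :
    (booleanSum G G').Adj x y ↔ Xor (G.Adj x y) (G'.Adj x y) :=
  Iff.rfl

theorem not_booleanSum_adj {x y : V} :
    ¬ (booleanSum G G').Adj x y ↔ (G.Adj x y ↔ G'.Adj x y) :=
  not_xor _ _

theorem isClique_or_isClique_compl_triple_iff [DecidableEq V] {x y z : V}
    (hxy : x ≠ y) (hxz : x ≠ z) (hyz : y ≠ z) :
    (G.IsClique (({x, y, z} : Finset V) : Set V) ∨ Gᶜ.IsClique (({x, y, z} : Finset V) : Set V))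
      ↔ (G.Adj x y ↔ G.Adj x z) ∧ (G.Adj x z ↔ G.Adj y z) := by
  have hcard : ({x, y, z} : Finset V).card = 3 :=
    Finset.card_eq_three.2 ⟨x, y, z, hxy, hxz, hyz, rfl⟩
  have hclique (H : SimpleGraph V) :
      H.IsClique (({x, y, z} : Finset V) : Set V) ↔ H.Adj x y ∧ H.Adj x z ∧ H.Adj y z := by
    rw [← is3Clique_triple_iff, isNClique_iff, hcard, and_iff_left rfl]
  simp only [hclique, compl_adj, ne_eq, hxy, hxz, hyz, not_false_eq_true, true_and]
  tauto

theorem SameHomog3.adj_iff_not_adj_of_booleanSum_adj (hsame : SameHomog3 G G') {a b z : V}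
    (hab : (booleanSum G G').Adj a b) (haz : a ≠ z) (hbz : b ≠ z)
    (ha_z : ¬ (booleanSum G G').Adj a z) (hb_z : ¬ (booleanSum G G').Adj b z) :
    G.Adj a z ↔ ¬ G.Adj b z := by
  classical
  have hhomog := hsame {a, b, z} (Finset.card_eq_three.2 ⟨a, b, z, hab.ne, haz, hbz, rfl⟩)
  rw [isClique_or_isClique_compl_triple_iff hab.ne haz hbz,
    isClique_or_isClique_compl_triple_iff hab.ne haz hbz] at hhomog
  rw [booleanSum_adj, xor_iff_not_iff] at hab
  rw [not_booleanSum_adj] at ha_z hb_z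
  tauto

theorem SameHomog3.booleanSum_triangle_dominating (hsame : SameHomog3 G G') {s : Finset V}
    (hs : (booleanSum G G').IsNClique 3 s) (v : V) :
    v ∈ s ∨ ∃ u ∈ s, (booleanSum G G').Adj u v := by
  classical
  obtain ⟨a, b, c, hab, hac, hbc, rfl⟩ := is3Clique_iff.1 hs
  by_contra! hv
  simp only [Finset.mem_insert, Finset.mem_singleton, not_or, forall_eq_or_imp, forall_eq] at hv
  obtain ⟨⟨hva, hvb, hvc⟩, ha_v, hb_v, hc_v⟩ := hv
  have h_ab := hsame.adj_iff_not_adj_of_booleanSum_adj hab (Ne.symm hva) (Ne.symm hvb) ha_v hb_v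
  have h_ac := hsame.adj_iff_not_adj_of_booleanSum_adj hac (Ne.symm hva) (Ne.symm hvc) ha_v hc_v
  have h_bc := hsame.adj_iff_not_adj_of_booleanSum_adj hbc (Ne.symm hvb) (Ne.symm hvc) hb_v hc_v
  tauto

end

theorem stmt_5_general {V : Type} (G G' : SimpleGraph V) (hsame : SameHomog3 G G')
    (U : SimpleGraph V) (hU : U = booleanSum G G') (hdisc : ¬ U.Connected) :
    U.CliqueFree 3 := by
  subst hU
  intro s hs
  obtain ⟨a, ha⟩ : s.Nonempty := Finset.card_pos.1 (by rw [hs.card_eq]; norm_num)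
  exact hdisc <| hs.isClique.connected_of_dominating ha
    fun v => hsame.booleanSum_triangle_dominating hs v

/-- If `U` is the Boolean sum of two graphs with the same 3-element homogeneous subsets and
`U` is disconnected, then `U` contains no triangle. -/
theorem stmt_5 {V : Type} [Fintype V] (G G' : SimpleGraph V) (hsame : SameHomog3 G G')
    (U : SimpleGraph V) (hU : U = booleanSum G G') (hdisc : ¬ U.Connected) :
    U.CliqueFree 3 :=
  stmt_5_general G G' hsame U hU hdisc
end

section
/- A finite simple graph G is isomorphic to the line graph of some triangle-free graph if and only if G contains no induced subgraph isomorphic to the claw K_{1,3} and no induced subgraph isomorphic to the diamond (K_4 minus an edge). -/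
open SimpleGraph

/-- The diamond: `K₄` minus an edge. -/
def diamond : SimpleGraph (Fin 4) := (⊤ : SimpleGraph (Fin 4)).deleteEdges {s(0, 1)}

/-!
In a line graph the neighbours of an edge `uv` split into the edges at `u` and those at `v`, two
cliques, so there is no claw; if the root graph is triangle-free, three pairwise adjacent edges
share a vertex, and the two triangles of a diamond would force its two middle edges to coincide.

Conversely, let `G` be claw-free and diamond-free. Two maximal cliques sharing two vertices are
equal (otherwise a diamond appears), and hence every vertex lies in at most two maximal cliques
(otherwise a claw appears). The root graph has the maximal cliques as vertices, plus a pendant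
vertex for every vertex of `G` lying in only one maximal clique; a vertex of `G` becomes the edge
joining its two maximal cliques, or its maximal clique and its pendant vertex. A triangle of the
root graph would be formed by the edges of three pairwise adjacent vertices of `G`; but these lie
in a common maximal clique, which would then be an endpoint of all three edges.
-/

instance Sym2.instNonempty {α : Type*} [h : Nonempty α] : Nonempty (Sym2 α) := h.map Sym2.diag

namespace SimpleGraph

variable {V W : Type*} {G : SimpleGraph V} {R : SimpleGraph W}

theorem nonempty_claw_embedding_iff :
    Nonempty (claw ↪g G) ↔ ∃ v a b c, G.Adj v a ∧ G.Adj v b ∧ G.Adj v c ∧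
      a ≠ b ∧ a ≠ c ∧ b ≠ c ∧ ¬ G.Adj a b ∧ ¬ G.Adj a c ∧ ¬ G.Adj b c := by
  constructor
  · rintro ⟨f⟩
    refine ⟨f (.inl 0), f (.inr 0), f (.inr 1), f (.inr 2), ?_⟩
    simp only [f.map_adj_iff, ne_eq, f.inj]
    simp [claw]
  · rintro ⟨v, a, b, c, hva, hvb, hvc, hab, hac, hbc, nab, nac, nbc⟩
    refine ⟨⟨⟨Sum.elim (fun _ => v) ![a, b, c], ?_⟩, ?_⟩⟩
    · rintro (x | x) (y | y) h
      · simp [Subsingleton.elim x y]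
      all_goals fin_cases x <;> fin_cases y <;> simp_all
    · rintro (x | x) (y | y) <;> fin_cases x <;> fin_cases y <;>
        simp_all [claw, G.adj_comm, DFunLike.coe]

theorem nonempty_diamond_embedding_iff :
    Nonempty (diamond ↪g G) ↔ ∃ a b c d, G.Adj a c ∧ G.Adj a d ∧ G.Adj b c ∧ G.Adj b d ∧
      G.Adj c d ∧ a ≠ b ∧ ¬ G.Adj a b := by
  constructor
  · rintro ⟨f⟩
    refine ⟨f 0, f 1, f 2, f 3, ?_⟩
    simp only [f.map_adj_iff, ne_eq, f.inj]
    simp [diamond]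
  · rintro ⟨a, b, c, d, hac, had, hbc, hbd, hcd, hab, nab⟩
    refine ⟨⟨⟨![a, b, c, d], ?_⟩, ?_⟩⟩
    · intro x y h
      fin_cases x <;> fin_cases y <;> simp_all
    · intro x y
      fin_cases x <;> fin_cases y <;>
        simp_all [diamond, G.adj_comm, Sym2.eq, Sym2.rel_iff', Prod.ext_iff, DFunLike.coe]

theorem lineGraph_clawFree : ¬ Nonempty (claw ↪g R.lineGraph) := by
  rw [nonempty_claw_embedding_iff]
  rintro ⟨⟨e, he⟩, e₁, e₂, e₃, h₁, h₂, h₃, n₁₂, n₁₃, n₂₃, a₁₂, a₁₃, a₂₃⟩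
  simp only [lineGraph_adj_iff_exists, ne_eq, n₁₂, n₁₃, n₂₃, not_false_eq_true, true_and,
    not_exists, not_and] at h₁ h₂ h₃ a₁₂ a₁₃ a₂₃
  obtain ⟨-, x₁, hx₁, hx₁'⟩ := h₁
  obtain ⟨-, x₂, hx₂, hx₂'⟩ := h₂
  obtain ⟨-, x₃, hx₃, hx₃'⟩ := h₃
  induction e using Sym2.ind with | h u v => ?_
  simp only [Sym2.mem_iff] at hx₁ hx₂ hx₃
  -- two of the three edges meet `s(u, v)` in the same endpoint
  rcases hx₁ with rfl | rfl <;> rcases hx₂ with rfl | rfl <;> rcases hx₃ with rfl | rfl <;>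
    grind

theorem exists_mem_of_lineGraph_triangle (hR : R.CliqueFree 3) {e₁ e₂ e₃ : R.edgeSet}
    (h₁₂ : R.lineGraph.Adj e₁ e₂) (h₁₃ : R.lineGraph.Adj e₁ e₃) (h₂₃ : R.lineGraph.Adj e₂ e₃) :
    ∃ x, x ∈ (e₁ : Sym2 W) ∧ x ∈ (e₂ : Sym2 W) ∧ x ∈ (e₃ : Sym2 W) := by
  classical
  rw [lineGraph_adj_iff_exists] at h₁₂ h₁₃ h₂₃
  obtain ⟨-, x, hx₁, hx₂⟩ := h₁₂
  obtain ⟨-, y, hy₁, hy₃⟩ := h₁₃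
  obtain ⟨-, z, hz₂, hz₃⟩ := h₂₃
  by_cases hxy : x = y
  · exact ⟨x, hx₁, hx₂, hxy ▸ hy₃⟩
  by_cases hxz : x = z
  · exact ⟨x, hx₁, hx₂, hxz ▸ hz₃⟩
  by_cases hyz : y = z
  · exact ⟨y, hy₁, hyz ▸ hz₂, hy₃⟩
  -- otherwise the three edges are `s(x, y)`, `s(x, z)`, `s(y, z)`, a triangle of `R`
  have adj {a b : W} (hab : a ≠ b) (e : R.edgeSet) (ha : a ∈ (e : Sym2 W))
      (hb : b ∈ (e : Sym2 W)) : R.Adj a b :=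
    R.mem_edgeSet.mp ((Sym2.mem_and_mem_iff hab).1 ⟨ha, hb⟩ ▸ e.2)
  exact (hR {x, y, z} (is3Clique_triple_iff.2
    ⟨adj hxy e₁ hx₁ hy₁, adj hxz e₂ hx₂ hz₂, adj hyz e₃ hy₃ hz₃⟩)).elim

theorem lineGraph_diamondFree (hR : R.CliqueFree 3) : ¬ Nonempty (diamond ↪g R.lineGraph) := by
  rw [nonempty_diamond_embedding_iff]
  rintro ⟨e₁, e₂, e₃, e₄, h₁₃, h₁₄, h₂₃, h₂₄, h₃₄, n₁₂, a₁₂⟩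
  obtain ⟨x, hx₁, hx₃, hx₄⟩ := exists_mem_of_lineGraph_triangle hR h₁₃ h₁₄ h₃₄
  obtain ⟨y, hy₂, hy₃, hy₄⟩ := exists_mem_of_lineGraph_triangle hR h₂₃ h₂₄ h₃₄
  by_cases hxy : x = y
  · exact a₁₂ (lineGraph_adj_iff_exists.2 ⟨n₁₂, x, hx₁, hxy ▸ hy₂⟩)
  · have h₃ := (Sym2.mem_and_mem_iff hxy).1 ⟨hx₃, hy₃⟩
    have h₄ := (Sym2.mem_and_mem_iff hxy).1 ⟨hx₄, hy₄⟩
    exact h₃₄.ne (Subtype.ext (h₃.trans h₄.symm))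

def cliquesAt (G : SimpleGraph V) (v : V) : Set (Set V) := {A | Maximal G.IsClique A ∧ v ∈ A}

theorem exists_mem_cliquesAt [Finite V] (v : V) : ∃ A, A ∈ cliquesAt G v :=
  let ⟨A, hvA, hA⟩ := Finite.exists_le_maximal (G.isClique_singleton v)
  ⟨A, hA, hvA rfl⟩

theorem eq_of_maximal_isClique_of_two_mem (hdiam : ¬ Nonempty (diamond ↪g G)) {A B : Set V}
    (hA : Maximal G.IsClique A) (hB : Maximal G.IsClique B) {u v : V} (huv : u ≠ v)
    (huA : u ∈ A) (hvA : v ∈ A) (huB : u ∈ B) (hvB : v ∈ B) : A = B := by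
  -- a non-edge between `A \ B` and `B \ A` would span a diamond with `u` and `v`
  have cross : ∀ x ∈ A, ∀ y ∈ B, x ∉ B → y ∉ A → G.Adj x y := by
    intro x hxA y hyB hxB hyA
    by_contra hxy
    refine hdiam (nonempty_diamond_embedding_iff.2 ⟨x, y, u, v, hA.1 hxA huA ?_, hA.1 hxA hvA ?_,
      hB.1 hyB huB ?_, hB.1 hyB hvB ?_, hA.1 huA hvA huv, ?_, hxy⟩) <;>
      rintro rfl <;> contradiction
  have hAB : G.IsClique (A ∪ B) := by
    rintro x (hxA | hxB) y (hyA | hyB) hxy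
    · exact hA.1 hxA hyA hxy
    · by_cases hxB : x ∈ B
      · exact hB.1 hxB hyB hxy
      by_cases hyA : y ∈ A
      · exact hA.1 hxA hyA hxy
      exact cross x hxA y hyB hxB hyA
    · by_cases hyB : y ∈ B
      · exact hB.1 hxB hyB hxy
      by_cases hxA : x ∈ A
      · exact hA.1 hxA hyA hxy
      exact (cross y hyA x hxB hyB hxA).symm
    · exact hB.1 hxB hyB hxy
  exact (hA.eq_of_subset hAB Set.subset_union_left).trans
    (hB.eq_of_subset hAB Set.subset_union_right).symm

theorem exists_mem_ne_of_mem_cliquesAt {A B : Set V} {v : V} (hA : A ∈ cliquesAt G v)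
    (hB : B ∈ cliquesAt G v) (hAB : A ≠ B) : ∃ a ∈ A, a ≠ v := by
  by_contra! h
  exact hAB (hA.1.eq_of_subset hB.1.1 fun x hx => h x hx ▸ hB.2)

theorem ne_and_not_adj_of_mem_cliquesAt [Finite V] (hdiam : ¬ Nonempty (diamond ↪g G))
    {A B : Set V} {v a b : V} (hA : A ∈ cliquesAt G v) (hB : B ∈ cliquesAt G v) (hAB : A ≠ B)
    (haA : a ∈ A) (hbB : b ∈ B) (hav : a ≠ v) (hbv : b ≠ v) : a ≠ b ∧ ¬ G.Adj a b := by
  refine ⟨?_, fun hab => hAB ?_⟩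
  · rintro rfl
    exact hAB (eq_of_maximal_isClique_of_two_mem hdiam hA.1 hB.1 hav haA hA.2 hbB hB.2)
  · have hvab : G.IsClique {v, a, b} := isClique_insert.2 ⟨isClique_pair.2 fun _ => hab, by
      rintro c (rfl | rfl) hvc
      exacts [hA.1.1 hA.2 haA hvc, hB.1.1 hB.2 hbB hvc]⟩
    obtain ⟨D, hvabD, hD⟩ := Finite.exists_le_maximal hvab
    have hvD : v ∈ D := hvabD (by simp)
    rw [eq_of_maximal_isClique_of_two_mem hdiam hA.1 hD hav haA hA.2 (hvabD (by simp)) hvD,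
      eq_of_maximal_isClique_of_two_mem hdiam hB.1 hD hbv hbB hB.2 (hvabD (by simp)) hvD]

theorem eq_or_eq_of_mem_cliquesAt [Finite V] (hclaw : ¬ Nonempty (claw ↪g G))
    (hdiam : ¬ Nonempty (diamond ↪g G)) {A B C : Set V} {v : V} (hA : A ∈ cliquesAt G v)
    (hB : B ∈ cliquesAt G v) (hC : C ∈ cliquesAt G v) (hAB : A ≠ B) : C = A ∨ C = B := by
  by_contra! hC'
  obtain ⟨a, haA, hav⟩ := exists_mem_ne_of_mem_cliquesAt hA hB hAB
  obtain ⟨b, hbB, hbv⟩ := exists_mem_ne_of_mem_cliquesAt hB hA hAB.symm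
  obtain ⟨c, hcC, hcv⟩ := exists_mem_ne_of_mem_cliquesAt hC hA hC'.1
  obtain ⟨hab, nab⟩ := ne_and_not_adj_of_mem_cliquesAt hdiam hA hB hAB haA hbB hav hbv
  obtain ⟨hac, nac⟩ := ne_and_not_adj_of_mem_cliquesAt hdiam hA hC hC'.1.symm haA hcC hav hcv
  obtain ⟨hbc, nbc⟩ := ne_and_not_adj_of_mem_cliquesAt hdiam hB hC hC'.2.symm hbB hcC hbv hcv
  exact hclaw (nonempty_claw_embedding_iff.2 ⟨v, a, b, c, hA.1.1 hA.2 haA hav.symm,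
    hB.1.1 hB.2 hbB hbv.symm, hC.1.1 hC.2 hcC hcv.symm, hab, hac, hbc, nab, nac, nbc⟩)

section RootGraph

/-- The endpoints of the edge of the root graph that represents `v`: the maximal cliques through
`v`, and a pendant vertex `inr v` if there is only one such clique. -/
def cliqueEnds (G : SimpleGraph V) (v : V) : Set (Set V ⊕ V) :=
  Sum.inl '' cliquesAt G v ∪ {x | x = .inr v ∧ (cliquesAt G v).Subsingleton}

noncomputable def cliqueEdge (G : SimpleGraph V) (v : V) : Sym2 (Set V ⊕ V) :=
  Classical.epsilon fun e : Sym2 _ => (e : Set _) = cliqueEnds G v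

def rootGraph (G : SimpleGraph V) : SimpleGraph (Set V ⊕ V) :=
  fromEdgeSet (Set.range (cliqueEdge G))

variable [Finite V] (hclaw : ¬ Nonempty (claw ↪g G)) (hdiam : ¬ Nonempty (diamond ↪g G))
include hclaw hdiam

theorem exists_sym2_coe_eq_cliqueEnds (v : V) :
    ∃ e : Sym2 (Set V ⊕ V), (e : Set _) = cliqueEnds G v := by
  by_cases h : (cliquesAt G v).Subsingleton
  · obtain ⟨A, hA⟩ := exists_mem_cliquesAt (G := G) v
    refine ⟨s(.inl A, .inr v), Set.ext fun x => ?_⟩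
    simp only [SetLike.mem_coe, Sym2.mem_iff, cliqueEnds, Set.mem_union, Set.mem_image,
      Set.mem_ofPred_eq, h, and_true]
    constructor
    · rintro (rfl | rfl)
      exacts [Or.inl ⟨A, hA, rfl⟩, Or.inr rfl]
    · rintro (⟨B, hB, rfl⟩ | rfl)
      exacts [Or.inl (by rw [h hB hA]), Or.inr rfl]
  · obtain ⟨A, hA, B, hB, hAB⟩ := Set.not_subsingleton_iff.1 h
    refine ⟨s(.inl A, .inl B), Set.ext fun x => ?_⟩
    simp only [SetLike.mem_coe, Sym2.mem_iff, cliqueEnds, Set.mem_union, Set.mem_image,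
      Set.mem_ofPred_eq, h, and_false, or_false]
    constructor
    · rintro (rfl | rfl)
      exacts [⟨A, hA, rfl⟩, ⟨B, hB, rfl⟩]
    · rintro ⟨C, hC, rfl⟩
      rcases eq_or_eq_of_mem_cliquesAt hclaw hdiam hA hB hC hAB with rfl | rfl <;> simp

theorem coe_cliqueEdge (v : V) : (cliqueEdge G v : Set _) = cliqueEnds G v :=
  Classical.epsilon_spec (exists_sym2_coe_eq_cliqueEnds hclaw hdiam v)

theorem inl_mem_cliqueEdge {v : V} {A : Set V} : .inl A ∈ cliqueEdge G v ↔ A ∈ cliquesAt G v := by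
  simp [← SetLike.mem_coe, coe_cliqueEdge hclaw hdiam, cliqueEnds]

theorem inr_mem_cliqueEdge {u v : V} :
    .inr u ∈ cliqueEdge G v ↔ u = v ∧ (cliquesAt G v).Subsingleton := by
  simp [← SetLike.mem_coe, coe_cliqueEdge hclaw hdiam, cliqueEnds]

theorem not_isDiag_cliqueEdge (v : V) : ¬ (cliqueEdge G v).IsDiag := by
  have of_mem {x y} (hxy : x ≠ y) (hx : x ∈ cliqueEdge G v) (hy : y ∈ cliqueEdge G v) :
      ¬ (cliqueEdge G v).IsDiag := by
    rwa [(Sym2.mem_and_mem_iff hxy).1 ⟨hx, hy⟩, Sym2.mk_isDiag_iff]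
  by_cases h : (cliquesAt G v).Subsingleton
  · obtain ⟨A, hA⟩ := exists_mem_cliquesAt (G := G) v
    exact of_mem Sum.inl_ne_inr ((inl_mem_cliqueEdge hclaw hdiam).2 hA)
      ((inr_mem_cliqueEdge hclaw hdiam).2 ⟨rfl, h⟩)
  · obtain ⟨A, hA, B, hB, hAB⟩ := Set.not_subsingleton_iff.1 h
    exact of_mem (Sum.inl_injective.ne hAB) ((inl_mem_cliqueEdge hclaw hdiam).2 hA)
      ((inl_mem_cliqueEdge hclaw hdiam).2 hB)

theorem edgeSet_rootGraph : (rootGraph G).edgeSet = Set.range (cliqueEdge G) := by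
  rw [rootGraph, edgeSet_fromEdgeSet, sdiff_eq_left, Set.disjoint_left]
  rintro _ ⟨v, rfl⟩
  exact not_isDiag_cliqueEdge hclaw hdiam v

theorem exists_mem_cliqueEdge_iff {u v : V} :
    (∃ x, x ∈ cliqueEdge G u ∧ x ∈ cliqueEdge G v) ↔ G.IsClique {u, v} := by
  constructor
  · rintro ⟨A | w, hu, hv⟩
    · rw [inl_mem_cliqueEdge hclaw hdiam] at hu hv
      exact hu.1.1.subset (Set.insert_subset hu.2 (Set.singleton_subset_iff.2 hv.2))
    · rw [inr_mem_cliqueEdge hclaw hdiam] at hu hv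
      exact isClique_pair.2 fun huv => absurd (hu.1.symm.trans hv.1) huv
  · intro huv
    obtain ⟨D, huvD, hD⟩ := Finite.exists_le_maximal huv
    exact ⟨.inl D, (inl_mem_cliqueEdge hclaw hdiam).2 ⟨hD, huvD (by simp)⟩,
      (inl_mem_cliqueEdge hclaw hdiam).2 ⟨hD, huvD (by simp)⟩⟩

theorem cliqueEdge_injective : Function.Injective (cliqueEdge G) := by
  intro u v huv
  by_cases h : (cliquesAt G u).Subsingleton
  · have := (inr_mem_cliqueEdge hclaw hdiam).2 ⟨rfl, h⟩
    rw [huv, inr_mem_cliqueEdge hclaw hdiam] at this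
    exact this.1
  · -- two distinct maximal cliques through `u` both contain `v`, so `u = v` by diamond-freeness
    obtain ⟨A, hA, B, hB, hAB⟩ := Set.not_subsingleton_iff.1 h
    have hA' := (inl_mem_cliqueEdge hclaw hdiam).2 hA
    have hB' := (inl_mem_cliqueEdge hclaw hdiam).2 hB
    rw [huv, inl_mem_cliqueEdge hclaw hdiam] at hA' hB'
    by_contra hne
    exact hAB (eq_of_maximal_isClique_of_two_mem hdiam hA.1 hB.1 hne hA.2 hA'.2 hB.2 hB'.2)

theorem cliqueFree_rootGraph : (rootGraph G).CliqueFree 3 := by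
  classical
  intro s hs
  obtain ⟨x, y, z, hxy, hxz, hyz, -⟩ := is3Clique_iff.1 hs
  simp only [rootGraph, fromEdgeSet_adj, Set.mem_range] at hxy hxz hyz
  obtain ⟨⟨a, ha⟩, hxy⟩ := hxy
  obtain ⟨⟨b, hb⟩, hxz⟩ := hxz
  obtain ⟨⟨c, hc⟩, hyz⟩ := hyz
  -- any two of `a`, `b`, `c` share an endpoint, so all three lie in a maximal clique `D`,
  -- and `inl D` would be an endpoint of all three sides of the triangle
  have pair {u w : V} {t : Set V ⊕ V} (hu : t ∈ cliqueEdge G u) (hw : t ∈ cliqueEdge G w) :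
      u ≠ w → G.Adj u w :=
    isClique_pair.1 ((exists_mem_cliqueEdge_iff hclaw hdiam).1 ⟨t, hu, hw⟩)
  have habc : G.IsClique {a, b, c} := by
    refine isClique_insert.2 ⟨isClique_pair.2 (pair (t := z) ?_ ?_), ?_⟩
    · simp [hb]
    · simp [hc]
    · rintro d (rfl | rfl)
      exacts [pair (t := x) (by simp [ha]) (by simp [hb]),
        pair (t := y) (by simp [ha]) (by simp [hc])]
  obtain ⟨D, habcD, hD⟩ := Finite.exists_le_maximal habc
  have hDa := (inl_mem_cliqueEdge hclaw hdiam (v := a)).2 ⟨hD, habcD (by simp)⟩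
  have hDb := (inl_mem_cliqueEdge hclaw hdiam (v := b)).2 ⟨hD, habcD (by simp)⟩
  have hDc := (inl_mem_cliqueEdge hclaw hdiam (v := c)).2 ⟨hD, habcD (by simp)⟩
  rw [ha, Sym2.mem_iff] at hDa
  rw [hb, Sym2.mem_iff] at hDb
  rw [hc, Sym2.mem_iff] at hDc
  grind

theorem nonempty_iso_lineGraph_rootGraph : Nonempty (G ≃g (rootGraph G).lineGraph) := by
  let f : V → (rootGraph G).edgeSet := fun v =>
    ⟨cliqueEdge G v, edgeSet_rootGraph hclaw hdiam ▸ ⟨v, rfl⟩⟩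
  have hf : Function.Bijective f := by
    refine ⟨fun u v huv => cliqueEdge_injective hclaw hdiam (congrArg Subtype.val huv), ?_⟩
    rintro ⟨e, he⟩
    obtain ⟨v, rfl⟩ := edgeSet_rootGraph hclaw hdiam ▸ he
    exact ⟨v, rfl⟩
  refine ⟨⟨Equiv.ofBijective f hf, fun {u v} => ?_⟩⟩
  rw [Equiv.ofBijective_apply, Equiv.ofBijective_apply, lineGraph_adj_iff_exists,
    hf.injective.ne_iff, exists_mem_cliqueEdge_iff hclaw hdiam, isClique_pair]
  exact ⟨fun h => h.2 h.1, fun h => ⟨h.ne, fun _ => h⟩⟩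

end RootGraph

end SimpleGraph

/-- Harary–Holzmann: a finite graph is isomorphic to the line graph of a triangle-free graph
iff it contains no induced claw and no induced diamond. -/
theorem stmt_9 {V : Type} [Fintype V] (G : SimpleGraph V) :
    (∃ (W : Type) (R : SimpleGraph W), R.CliqueFree 3 ∧ Nonempty (G ≃g R.lineGraph)) ↔
      (¬ Nonempty (claw ↪g G) ∧ ¬ Nonempty (diamond ↪g G)) := by
  constructor
  · rintro ⟨W, R, hR, ⟨e⟩⟩
    exact ⟨fun ⟨f⟩ => lineGraph_clawFree ⟨e.toEmbedding.comp f⟩,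
      fun ⟨f⟩ => lineGraph_diamondFree hR ⟨e.toEmbedding.comp f⟩⟩
  · rintro ⟨hclaw, hdiam⟩
    exact ⟨_, rootGraph G, cliqueFree_rootGraph hclaw hdiam,
      nonempty_iso_lineGraph_rootGraph hclaw hdiam⟩
end

section
/- Let V be a finite set of v vertices, let t and k be positive integers with t ≤ k, t ≤ v − k and k ≤ v, and let G and G' be two simple graphs on V. If G and G' are k-hypomorphic up to complementation, then G and G' are t-hypomorphic up to complementation. -/
/-!
Fix a `t`-set `T₀` and let `X = G'[T₀]`. Put `f T = [G[T] ≅ X] - [G'[T] ≅ X]`, isomorphism taken up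
to complementation. For a `k`-set `K`, an isomorphism up to complementation between `G[K]` and
`G'[K]` permutes the `t`-subsets of `K` and preserves the class of the induced subgraphs, so the sum
of `f` over the `t`-subsets of `K` vanishes. By the theorem of Gottlieb and Kantor the inclusion
matrix of `t`-sets versus `k`-sets of a `v`-set has full row rank when `t ≤ k` and `t + k ≤ v`, hence
`f = 0`, and `f T₀ = 0` says that `G[T₀]` is isomorphic to `G'[T₀]` up to complementation.
-/

open SimpleGraph

def KHypoUpToCompl {V : Type*} (G G' : SimpleGraph V) (k : ℕ) : Prop :=
  ∀ K : Finset V, K.card = k →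
    (Nonempty ((G'.induce ↑K) ≃g (G.induce ↑K)) ∨
     Nonempty ((G'.induce ↑K) ≃g (G.induce (↑K : Set V))ᶜ))

namespace Finset

variable {α M : Type*} [DecidableEq α] [AddCommGroup M]

theorem sum_sum_powersetCard_erase (f : Finset α → M) (A : Finset α) (t : ℕ) :
    ∑ x ∈ A, ∑ T ∈ (A.erase x).powersetCard t, f T = (#A - t) • ∑ T ∈ A.powersetCard t, f T :=
  calc ∑ x ∈ A, ∑ T ∈ (A.erase x).powersetCard t, f T
      = ∑ x ∈ A, ∑ T ∈ A.powersetCard t with x ∉ T, f T := by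
        refine sum_congr rfl fun x _ => sum_congr ?_ fun _ _ => rfl
        ext T
        simp only [mem_powersetCard, mem_filter, subset_erase]
        tauto
    _ = ∑ T ∈ A.powersetCard t, ∑ x ∈ A \ T, f T :=
        sum_comm' fun x T => by simp only [mem_filter, mem_sdiff]; tauto
    _ = ∑ T ∈ A.powersetCard t, (#A - t) • f T := by
        refine sum_congr rfl fun T hT => ?_
        rw [mem_powersetCard] at hT
        rw [sum_const, card_sdiff_of_subset hT.1, hT.2]
    _ = (#A - t) • ∑ T ∈ A.powersetCard t, f T := (smul_sum ..).symm

variable [IsAddTorsionFree M] {f : Finset α → M} {t k : ℕ}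

theorem sum_powersetCard_eq_zero_of_le_card (htk : t ≤ k)
    (hf : ∀ K : Finset α, #K = k → ∑ T ∈ K.powersetCard t, f T = 0) {A : Finset α}
    (hA : k ≤ #A) : ∑ T ∈ A.powersetCard t, f T = 0 := by
  suffices ∀ n, k ≤ n → ∀ A : Finset α, #A = n → ∑ T ∈ A.powersetCard t, f T = 0 from
    this _ hA A rfl
  intro n hn
  induction n, hn using Nat.le_induction with
  | base => exact hf
  | succ n hkn ih =>
    intro A hA
    have h : (#A - t) • ∑ T ∈ A.powersetCard t, f T = 0 := by
      rw [← sum_sum_powersetCard_erase]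
      exact sum_eq_zero fun x hx => ih _ (by rw [card_erase_of_mem hx, hA]; rfl)
    exact (nsmul_eq_zero_iff_right (by omega)).1 h

/-- Splitting by whether `x ∈ T`, the sum for `(insert x A, B)` is the difference of the sums for
`(A, B)` and `(A, insert x B)`; at `A = ∅` it is a sum over the `t`-subsets of `Bᶜ`. -/
theorem sum_powersetCard_filter_subset_disjoint_eq_zero [Fintype α] (htk : t ≤ k)
    (hf : ∀ K : Finset α, #K = k → ∑ T ∈ K.powersetCard t, f T = 0) (A B : Finset α)
    (hAB : #A + #B + k ≤ Fintype.card α) :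
    ∑ T ∈ (univ : Finset α).powersetCard t with A ⊆ T ∧ Disjoint B T, f T = 0 := by
  induction A using Finset.induction_on generalizing B with
  | empty =>
    have hfilter : {T ∈ (univ : Finset α).powersetCard t | ∅ ⊆ T ∧ Disjoint B T}
        = (univ \ B).powersetCard t := by
      ext T
      simp only [mem_filter, mem_powersetCard, subset_sdiff, empty_subset, true_and,
        subset_univ, disjoint_comm, and_comm]
    rw [hfilter]
    refine sum_powersetCard_eq_zero_of_le_card htk hf ?_
    rw [card_sdiff_of_subset (subset_univ B), card_univ]
    simp only [card_empty] at hAB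
    omega
  | insert x A hx ih =>
    rw [card_insert_of_notMem hx] at hAB
    have hsplit : ∑ T ∈ univ.powersetCard t with A ⊆ T ∧ Disjoint B T, f T
        = ∑ T ∈ univ.powersetCard t with insert x A ⊆ T ∧ Disjoint B T, f T
          + ∑ T ∈ univ.powersetCard t with A ⊆ T ∧ Disjoint (insert x B) T, f T := by
      rw [← sum_filter_add_sum_filter_not _ (x ∈ ·), filter_filter, filter_filter]
      congr 2 <;> ext T <;>
        simp only [mem_filter, insert_subset_iff, disjoint_insert_left] <;> tauto
    rw [ih B (by omega), ih (insert x B) (by have := card_insert_le x B; omega)] at hsplit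
    simpa using hsplit.symm

theorem eq_zero_of_sum_powersetCard_eq_zero [Fintype α] (htk : t ≤ k)
    (hkv : t + k ≤ Fintype.card α)
    (hf : ∀ K : Finset α, #K = k → ∑ T ∈ K.powersetCard t, f T = 0) {T : Finset α}
    (hT : #T = t) : f T = 0 := by
  have h := sum_powersetCard_filter_subset_disjoint_eq_zero htk hf T ∅
    (by rw [card_empty, hT]; omega)
  have hfilter : {S ∈ (univ : Finset α).powersetCard t | T ⊆ S ∧ Disjoint ∅ S} = {T} := by
    ext S
    simp only [mem_filter, mem_powersetCard_univ, mem_singleton, disjoint_empty_left, and_true]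
    constructor
    · rintro ⟨hS, hTS⟩
      exact (eq_of_subset_of_card_le hTS (by omega)).symm
    · rintro rfl
      exact ⟨hT, Subset.refl _⟩
  rwa [hfilter, sum_singleton] at h

end Finset

namespace SimpleGraph

open Finset

variable {β γ δ : Type*} {H H₁ : SimpleGraph β} {H₂ : SimpleGraph γ} {X : SimpleGraph δ}

def IsoUpToCompl (H : SimpleGraph β) (X : SimpleGraph γ) : Prop :=
  Nonempty (H ≃g X) ∨ Nonempty (H ≃g Xᶜ)

def Iso.compl (e : H ≃g X) : Hᶜ ≃g Xᶜ :=
  ⟨e.toEquiv, by simp [compl_adj, e.map_rel_iff]⟩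

theorem nonempty_compl_iso_iff : Nonempty (Hᶜ ≃g X) ↔ Nonempty (H ≃g Xᶜ) :=
  ⟨fun ⟨e⟩ => ⟨compl_compl H ▸ e.compl⟩, fun ⟨e⟩ => ⟨compl_compl X ▸ e.compl⟩⟩

theorem IsoUpToCompl.refl (H : SimpleGraph β) : IsoUpToCompl H H := .inl ⟨.refl⟩

theorem isoUpToCompl_compl_left : IsoUpToCompl Hᶜ X ↔ IsoUpToCompl H X := by
  rw [IsoUpToCompl, IsoUpToCompl, nonempty_compl_iso_iff, nonempty_compl_iso_iff, compl_compl,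
    or_comm]

theorem Iso.isoUpToCompl_iff (e : H₁ ≃g H₂) : IsoUpToCompl H₁ X ↔ IsoUpToCompl H₂ X :=
  or_congr ⟨fun ⟨i⟩ => ⟨e.symm.trans i⟩, fun ⟨i⟩ => ⟨e.trans i⟩⟩
    ⟨fun ⟨i⟩ => ⟨e.symm.trans i⟩, fun ⟨i⟩ => ⟨e.trans i⟩⟩

theorem IsoUpToCompl.symm : IsoUpToCompl H X → IsoUpToCompl X H
  | .inl ⟨e⟩ => .inl ⟨e.symm⟩
  | .inr ⟨e⟩ => isoUpToCompl_compl_left.1 (.inl ⟨e.symm⟩)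

theorem induce_compl (H : SimpleGraph β) (s : Set β) : Hᶜ.induce s = (H.induce s)ᶜ := by
  ext a b
  simp [Subtype.ext_iff]

noncomputable def Embedding.induceMapIso (φ : H₁ ↪g H₂) (A : Finset β) :
    H₁.induce (A : Set β) ≃g H₂.induce (A.map φ.toEmbedding : Set γ) where
  toEquiv := (Equiv.Set.image φ A φ.injective).trans (Equiv.setCongr (Finset.coe_map _ A).symm)
  map_rel_iff' := φ.map_adj_iff

open Classical in
noncomputable def inducedIsoUpToComplCount [Fintype β] (H : SimpleGraph β)
    (X : SimpleGraph γ) (t : ℕ) : ℕ :=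
  #((univ : Finset β).powersetCard t |>.filter fun A : Finset β => IsoUpToCompl (H.induce A) X)

open Classical in
theorem Embedding.card_filter_powersetCard_map [Fintype β] (φ : H₁ ↪g H₂) (X : SimpleGraph δ)
    (t : ℕ) :
    #(((univ : Finset β).map φ.toEmbedding).powersetCard t |>.filter
        fun B : Finset γ => IsoUpToCompl (H₂.induce B) X)
      = inducedIsoUpToComplCount H₁ X t := by
  rw [powersetCard_map, filter_map, card_map, inducedIsoUpToComplCount]
  congr 1
  exact filter_congr fun A _ => (φ.induceMapIso A).isoUpToCompl_iff.symm

theorem Iso.inducedIsoUpToComplCount_eq [Fintype β] [Fintype γ] (e : H₁ ≃g H₂)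
    (X : SimpleGraph δ) (t : ℕ) :
    inducedIsoUpToComplCount H₁ X t = inducedIsoUpToComplCount H₂ X t := by
  rw [← e.toEmbedding.card_filter_powersetCard_map, inducedIsoUpToComplCount]
  congr
  exact Finset.map_univ_equiv e.toEquiv

theorem inducedIsoUpToComplCount_compl [Fintype β] (H : SimpleGraph β) (X : SimpleGraph γ)
    (t : ℕ) : inducedIsoUpToComplCount Hᶜ X t = inducedIsoUpToComplCount H X t := by
  classical
  unfold inducedIsoUpToComplCount
  congr 1
  exact filter_congr fun A _ => by rw [induce_compl, isoUpToCompl_compl_left]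

theorem IsoUpToCompl.inducedIsoUpToComplCount_eq [Fintype β] [Fintype γ]
    (h : IsoUpToCompl H₁ H₂) (X : SimpleGraph δ) (t : ℕ) :
    inducedIsoUpToComplCount H₁ X t = inducedIsoUpToComplCount H₂ X t := by
  rcases h with ⟨⟨e⟩⟩ | ⟨⟨e⟩⟩
  · exact e.inducedIsoUpToComplCount_eq X t
  · rw [e.inducedIsoUpToComplCount_eq, inducedIsoUpToComplCount_compl]

open Classical in
theorem card_filter_powersetCard_eq_inducedIsoUpToComplCount {V : Type*} (G : SimpleGraph V)
    (K : Finset V) (X : SimpleGraph γ) (t : ℕ) :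
    #(K.powersetCard t |>.filter fun T : Finset V => IsoUpToCompl (G.induce T) X)
      = inducedIsoUpToComplCount (G.induce K) X t := by
  rw [← (Embedding.induce (G := G) (K : Set V)).card_filter_powersetCard_map]
  congr
  ext x
  simp

end SimpleGraph

open Finset in
theorem stmt_10_general {V : Type} [Fintype V] (G G' : SimpleGraph V) (t k : ℕ)
    (htk : t ≤ k) (htvk : t ≤ Fintype.card V - k)
    (hkv : k ≤ Fintype.card V) (h : KHypoUpToCompl G G' k) :
    KHypoUpToCompl G G' t := by
  classical
  intro T₀ hT₀
  let X := G'.induce (T₀ : Set V)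
  let f : Finset V → ℤ := fun T =>
    (if IsoUpToCompl (G.induce T) X then 1 else 0) - if IsoUpToCompl (G'.induce T) X then 1 else 0
  have hf : ∀ K : Finset V, #K = k → ∑ T ∈ K.powersetCard t, f T = 0 := fun K hK => by
    have hK' : IsoUpToCompl (G.induce K) (G'.induce K) := IsoUpToCompl.symm (h K hK)
    simp only [f, sum_sub_distrib, sum_boole, card_filter_powersetCard_eq_inducedIsoUpToComplCount,
      hK'.inducedIsoUpToComplCount_eq, sub_self]
  have hfT₀ : f T₀ = 0 := eq_zero_of_sum_powersetCard_eq_zero htk (by omega) hf hT₀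
  have hGT₀ : IsoUpToCompl (G.induce T₀) X := by
    by_contra hG
    simp only [f, hG, if_false, zero_sub, neg_eq_zero, ite_eq_right_iff] at hfT₀
    exact one_ne_zero (hfT₀ (.refl X))
  exact hGT₀.symm

/-- Proposition 4: if `t ≤ k`, `t ≤ v - k`, `k ≤ v` and `G, G'` are `k`-hypomorphic up to
complementation, then they are `t`-hypomorphic up to complementation. -/
theorem stmt_10 {V : Type} [Fintype V] (G G' : SimpleGraph V) (t k : ℕ)
    (ht : 0 < t) (hk : 0 < k) (htk : t ≤ k) (htvk : t ≤ Fintype.card V - k)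
    (hkv : k ≤ Fintype.card V) (h : KHypoUpToCompl G G' k) :
    KHypoUpToCompl G G' t :=
  stmt_10_general G G' t k htk htvk hkv h
end

section
/- Let G be a finite simple graph that is claw-free and co-claw-free. If G is disconnected, then every connected component of G is a cycle of length at least 4 or a path; equivalently, G is triangle-free and every vertex of G has degree at most 2, with no component a cycle of length 3. -/
open SimpleGraph

/-- The connected component `c` of `G` induces a cycle of length at least 4 or a path. -/
def CompIsCycleGe4OrPath {V : Type*} (G : SimpleGraph V) (c : G.ConnectedComponent) : Prop :=
  (∃ n, 4 ≤ n ∧ Nonempty (G.induce c.supp ≃g cycleGraph n)) ∨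
  (∃ n, Nonempty (G.induce c.supp ≃g pathGraph n))

/-!
A triangle together with a vertex outside its component is a co-claw, so `G` is triangle-free;
a vertex with three distinct neighbours is then the centre of a claw, so every vertex has at most
two neighbours. In a finite connected graph of maximum degree two, a longest path `p` visits every
vertex: by maximality all neighbours of its ends lie on `p`, and its inner vertices already have
two neighbours on `p`. Hence the only edge off `p` can join its two ends: the graph is either the
path `p` or a cycle, whose length is at least four because there are no triangles.
-/

namespace SimpleGraph

variable {V : Type*} {G : SimpleGraph V}

/-- `G.maxDegree ≤ 2`, stated without finiteness so that it passes to induced subgraphs. -/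
def MaxDegreeLeTwo (G : SimpleGraph V) : Prop :=
  ∀ ⦃v a b y : V⦄, G.Adj v a → G.Adj v b → a ≠ b → G.Adj v y → y = a ∨ y = b

lemma MaxDegreeLeTwo.comap {W : Type*} {H : SimpleGraph W} (f : H ↪g G)
    (hG : G.MaxDegreeLeTwo) : H.MaxDegreeLeTwo := by
  intro v a b y ha hb hab hy
  simpa only [f.injective.eq_iff] using
    hG (f.map_adj_iff.2 ha) (f.map_adj_iff.2 hb) (f.injective.ne hab) (f.map_adj_iff.2 hy)

lemma MaxDegreeLeTwo.degree_le_two (hG : G.MaxDegreeLeTwo) (v : V)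
    [Fintype (G.neighborSet v)] : G.degree v ≤ 2 := by
  by_contra! h
  obtain ⟨a, ha, b, hb, c, hc, hab, hac, hbc⟩ := Finset.two_lt_card.1 h
  rw [mem_neighborFinset] at ha hb hc
  rcases hG ha hb hab hc with rfl | rfl
  · exact hac rfl
  · exact hbc rfl

lemma nonempty_claw_embedding {v a b c : V} (hva : G.Adj v a) (hvb : G.Adj v b)
    (hvc : G.Adj v c) (hab : a ≠ b) (hac : a ≠ c) (hbc : b ≠ c)
    (nab : ¬G.Adj a b) (nac : ¬G.Adj a c) (nbc : ¬G.Adj b c) : Nonempty (claw ↪g G) := by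
  let f : Fin 1 ⊕ Fin 3 → V := Sum.elim (fun _ => v) ![a, b, c]
  have hinj : f.Injective := by
    rintro (x | x) (y | y) h <;> fin_cases x <;> fin_cases y <;>
      simp_all [f, hva.ne, hvb.ne, hvc.ne, hva.ne', hvb.ne', hvc.ne']
  have hadj : ∀ x y, G.Adj (f x) (f y) ↔ claw.Adj x y := by
    rintro (x | x) (y | y) <;> fin_cases x <;> fin_cases y <;>
      simp_all [f, claw, hva.symm, hvb.symm, hvc.symm, G.adj_comm b a, G.adj_comm c a,
        G.adj_comm c b]
  exact ⟨⟨⟨f, hinj⟩, hadj _ _⟩⟩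

lemma nonempty_compl_claw_embedding {z a b c : V} (hab : G.Adj a b) (hac : G.Adj a c)
    (hbc : G.Adj b c) (hza : z ≠ a) (hzb : z ≠ b) (hzc : z ≠ c)
    (nza : ¬G.Adj z a) (nzb : ¬G.Adj z b) (nzc : ¬G.Adj z c) : Nonempty (clawᶜ ↪g G) := by
  let f : Fin 1 ⊕ Fin 3 → V := Sum.elim (fun _ => z) ![a, b, c]
  have hinj : f.Injective := by
    rintro (x | x) (y | y) h <;> fin_cases x <;> fin_cases y <;>
      simp_all [f, hab.ne, hac.ne, hbc.ne, hab.ne', hac.ne', hbc.ne']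
  have hadj : ∀ x y, G.Adj (f x) (f y) ↔ clawᶜ.Adj x y := by
    rintro (x | x) (y | y) <;> fin_cases x <;> fin_cases y <;>
      simp_all [f, claw, hab.symm, hac.symm, hbc.symm, G.adj_comm a z, G.adj_comm b z,
        G.adj_comm c z]
  exact ⟨⟨⟨f, hinj⟩, hadj _ _⟩⟩

lemma cliqueFree_three_of_not_connected (hcoclaw : ¬Nonempty (clawᶜ ↪g G))
    (hdisc : ¬G.Connected) : G.CliqueFree 3 := by
  classical
  intro s hs
  obtain ⟨a, b, c, hab, hac, hbc, rfl⟩ := is3Clique_iff.1 hs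
  obtain ⟨z, hz⟩ : ∃ z, ¬G.Reachable a z := by
    by_contra! h
    have : Nonempty V := ⟨a⟩
    exact hdisc ⟨fun x y => (h x).symm.trans (h y)⟩
  have hzb : ¬G.Reachable b z := fun h => hz (hab.reachable.trans h)
  have hzc : ¬G.Reachable c z := fun h => hz (hac.reachable.trans h)
  refine hcoclaw (nonempty_compl_claw_embedding (z := z) hab hac hbc ?_ ?_ ?_ ?_ ?_ ?_)
  · rintro rfl; exact hz .rfl
  · rintro rfl; exact hzb .rfl
  · rintro rfl; exact hzc .rfl
  · exact fun h => hz h.symm.reachable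
  · exact fun h => hzb h.symm.reachable
  · exact fun h => hzc h.symm.reachable

lemma maxDegreeLeTwo_of_clawFree (hclaw : ¬Nonempty (claw ↪g G)) (htri : G.CliqueFree 3) :
    G.MaxDegreeLeTwo := by
  classical
  intro v a b y ha hb hab hy
  by_contra! h
  have nadj : ∀ {x x'}, G.Adj v x → G.Adj v x' → ¬G.Adj x x' := fun hx hx' hxx' =>
    htri _ (is3Clique_triple_iff.2 ⟨hx, hx', hxx'⟩)
  exact hclaw (nonempty_claw_embedding ha hb hy hab (Ne.symm h.1) (Ne.symm h.2)
    (nadj ha hb) (nadj ha hy) (nadj hb hy))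

lemma cycleGraph_adj_iff_val {n : ℕ} (hn : 2 ≤ n) {i j : Fin n} :
    (cycleGraph n).Adj i j ↔ (i.val + 1 = j.val ∨ j.val + 1 = i.val) ∨
      (i.val = 0 ∧ j.val = n - 1 ∨ j.val = 0 ∧ i.val = n - 1) := by
  have hsub (a b : Fin n) :
      (a - b).val = 1 ↔ a.val = b.val + 1 ∨ a.val = 0 ∧ b.val = n - 1 := by
    rcases le_or_gt b a with h | h
    · rw [Fin.coe_sub_iff_le.2 h]
      have := Fin.le_def.1 h
      omega
    · rw [Fin.coe_sub_iff_lt.2 h]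
      have := Fin.lt_def.1 h
      omega
  rw [cycleGraph_adj', hsub, hsub]
  omega

namespace Walk

variable {u v : V} {p : G.Walk u v}

lemma adj_getVert_pred {k : ℕ} (hk0 : 0 < k) (hk : k ≤ p.length) :
    G.Adj (p.getVert k) (p.getVert (k - 1)) := by
  simpa [Nat.sub_add_cancel hk0] using (p.adj_getVert_succ (i := k - 1) (by omega)).symm

lemma IsPath.eq_or_eq_of_adj_getVert (hG : G.MaxDegreeLeTwo) (hp : p.IsPath) {k : ℕ}
    (hk0 : 0 < k) (hk : k < p.length) {y : V} (hy : G.Adj (p.getVert k) y) :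
    y = p.getVert (k - 1) ∨ y = p.getVert (k + 1) :=
  hG (p.adj_getVert_pred hk0 hk.le) (p.adj_getVert_succ hk)
    (fun h => by
      have := hp.getVert_injOn (by simp; omega) (by simp; omega) h
      omega) hy

lemma IsPath.eq_zero_and_eq_length_of_adj_getVert (hG : G.MaxDegreeLeTwo) (hp : p.IsPath)
    {i j : ℕ} (hij : i + 1 < j) (hj : j ≤ p.length) (h : G.Adj (p.getVert i) (p.getVert j)) :
    i = 0 ∧ j = p.length := by
  have hinj : ∀ {k l}, k ≤ p.length → l ≤ p.length → p.getVert k = p.getVert l → k = l :=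
    fun hk hl hkl => hp.getVert_injOn hk hl hkl
  constructor
  · by_contra hi
    rcases hp.eq_or_eq_of_adj_getVert hG (by omega) (by omega) h with h' | h' <;>
      have := hinj hj (by omega) h' <;> omega
  · by_contra hj'
    rcases hp.eq_or_eq_of_adj_getVert hG (by omega) (by omega) h.symm with h' | h' <;>
      have := hinj (by omega) (by omega) h' <;> omega

lemma IsPath.adj_getVert_iff (hG : G.MaxDegreeLeTwo) (hp : p.IsPath) {i j : ℕ}
    (hi : i ≤ p.length) (hj : j ≤ p.length) :
    G.Adj (p.getVert i) (p.getVert j) ↔ (i + 1 = j ∨ j + 1 = i) ∨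
      (1 < p.length ∧ G.Adj u v ∧ (i = 0 ∧ j = p.length ∨ j = 0 ∧ i = p.length)) := by
  constructor
  · intro h
    rcases lt_trichotomy (i + 1) j with hij | hij | hij
    · obtain ⟨rfl, rfl⟩ := hp.eq_zero_and_eq_length_of_adj_getVert hG hij hj h
      exact .inr ⟨hij, by simpa using h, .inl ⟨rfl, rfl⟩⟩
    · exact .inl (.inl hij)
    rcases lt_trichotomy (j + 1) i with hji | hji | hji
    · obtain ⟨rfl, rfl⟩ := hp.eq_zero_and_eq_length_of_adj_getVert hG hji hi h.symm
      exact .inr ⟨hji, by simpa using h.symm, .inr ⟨rfl, rfl⟩⟩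
    · exact .inl (.inr hji)
    · obtain rfl : i = j := by omega
      exact absurd h G.irrefl
  · rintro ((rfl | rfl) | ⟨-, huv, ⟨rfl, rfl⟩ | ⟨rfl, rfl⟩⟩)
    · exact p.adj_getVert_succ (by omega)
    · exact (p.adj_getVert_succ (by omega)).symm
    · simpa using huv
    · simpa using huv.symm

lemma IsPath.mem_support_of_adj_of_forall_length_le (hp : p.IsPath)
    (hmax : ∀ (a b : V) (q : G.Walk a b), q.IsPath → q.length ≤ p.length) {y : V}
    (hy : G.Adj u y) : y ∈ p.support := by
  by_contra h
  simpa using hmax _ _ _ (hp.cons h (h := hy.symm))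

lemma IsPath.mem_support_of_forall_length_le (hG : G.MaxDegreeLeTwo) (hconn : G.Preconnected)
    (hp : p.IsPath) (hmax : ∀ (a b : V) (q : G.Walk a b), q.IsPath → q.length ≤ p.length)
    (w : V) : w ∈ p.support := by
  have hclosed : ∀ x ∈ p.support, ∀ y, G.Adj x y → y ∈ p.support := by
    intro x hx y hxy
    obtain ⟨k, rfl, hk⟩ := mem_support_iff_exists_getVert.1 hx
    rcases Nat.eq_zero_or_pos k with rfl | hk0
    · exact hp.mem_support_of_adj_of_forall_length_le hmax (by simpa using hxy)
    rcases hk.lt_or_eq with hk | rfl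
    · rcases hp.eq_or_eq_of_adj_getVert hG hk0 hk hxy with rfl | rfl <;>
        exact p.getVert_mem_support _
    · simpa using hp.reverse.mem_support_of_adj_of_forall_length_le (by simpa using hmax)
        (y := y) (by simpa using hxy)
  by_contra hw
  obtain ⟨d, -, hd₁, hd₂⟩ :=
    (hconn u w).some.exists_boundary_dart {x | x ∈ p.support} p.start_mem_support hw
  exact hd₂ (hclosed _ hd₁ _ d.adj)

lemma IsPath.bijective_getVert (hp : p.IsPath) (hsupp : ∀ w, w ∈ p.support) :
    Function.Bijective fun i : Fin (p.length + 1) => p.getVert i := by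
  refine ⟨fun i j h => Fin.ext (hp.getVert_injOn (by simp; omega) (by simp; omega) h),
    fun w => ?_⟩
  obtain ⟨k, rfl, hk⟩ := mem_support_iff_exists_getVert.1 (hsupp w)
  exact ⟨⟨k, by omega⟩, rfl⟩

lemma IsPath.nonempty_iso_pathGraph (hG : G.MaxDegreeLeTwo) (hp : p.IsPath)
    (hsupp : ∀ w, w ∈ p.support) (huv : ¬(1 < p.length ∧ G.Adj u v)) :
    Nonempty (G ≃g pathGraph (p.length + 1)) := by
  refine ⟨RelIso.symm ⟨Equiv.ofBijective _ (hp.bijective_getVert hsupp), @fun i j => ?_⟩⟩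
  rw [Equiv.ofBijective_apply, Equiv.ofBijective_apply,
    hp.adj_getVert_iff hG (by omega) (by omega), pathGraph_adj]
  tauto

lemma IsPath.nonempty_iso_cycleGraph (hG : G.MaxDegreeLeTwo) (hp : p.IsPath)
    (hsupp : ∀ w, w ∈ p.support) (hlen : 1 < p.length) (huv : G.Adj u v) :
    Nonempty (G ≃g cycleGraph (p.length + 1)) := by
  refine ⟨RelIso.symm ⟨Equiv.ofBijective _ (hp.bijective_getVert hsupp), @fun i j => ?_⟩⟩
  rw [Equiv.ofBijective_apply, Equiv.ofBijective_apply,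
    hp.adj_getVert_iff hG (by omega) (by omega), cycleGraph_adj_iff_val (by omega),
    Nat.add_sub_cancel]
  simp only [hlen, huv, true_and]

end Walk

lemma exists_isPath_forall_length_le [Finite V] [Nonempty V] (G : SimpleGraph V) :
    ∃ (u v : V) (p : G.Walk u v), p.IsPath ∧
      ∀ (a b : V) (q : G.Walk a b), q.IsPath → q.length ≤ p.length := by
  classical
  have := Fintype.ofFinite V
  obtain ⟨w⟩ := ‹Nonempty V›
  have : Nonempty (Σ a b : V, G.Path a b) := ⟨⟨w, w, Path.nil⟩⟩
  obtain ⟨⟨u, v, p⟩, hp⟩ :=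
    Finite.exists_max fun x : Σ a b : V, G.Path a b => x.2.2.1.length
  exact ⟨u, v, p, p.2, fun a b q hq => hp ⟨a, b, q, hq⟩⟩

theorem Connected.nonempty_iso_cycleGraph_or_pathGraph [Finite V] (hconn : G.Connected)
    (hG : G.MaxDegreeLeTwo) (htri : G.CliqueFree 3) :
    (∃ n, 4 ≤ n ∧ Nonempty (G ≃g cycleGraph n)) ∨ ∃ n, Nonempty (G ≃g pathGraph n) := by
  classical
  have := hconn.nonempty
  obtain ⟨u, v, p, hp, hmax⟩ := G.exists_isPath_forall_length_le
  have hsupp := hp.mem_support_of_forall_length_le hG hconn.preconnected hmax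
  by_cases huv : 1 < p.length ∧ G.Adj u v
  · refine .inl ⟨p.length + 1, ?_, hp.nonempty_iso_cycleGraph hG hsupp huv.1 huv.2⟩
    by_contra! hlen
    refine htri {u, p.getVert 1, v} (is3Clique_triple_iff.2 ⟨?_, huv.2, ?_⟩)
    · simpa using p.adj_getVert_succ (i := 0) (by omega)
    · have h12 := p.adj_getVert_succ (i := 1) (by omega)
      rwa [show 1 + 1 = p.length by omega, Walk.getVert_length] at h12
  · exact .inr ⟨_, hp.nonempty_iso_pathGraph hG hsupp huv⟩

end SimpleGraph

/-- Step (1) of the proof of Theorem 1: if a finite claw-free and co-claw-free graph is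
disconnected, then each of its connected components is a cycle of length at least 4 or a
path; equivalently, it is triangle-free, has maximum degree at most 2, and has no component
that is a 3-cycle. -/
theorem stmt_11 {V : Type} [Fintype V] (G : SimpleGraph V) [DecidableRel G.Adj]
    (hclaw : ¬ Nonempty (claw ↪g G)) (hcoclaw : ¬ Nonempty (clawᶜ ↪g G))
    (hdisc : ¬ G.Connected) :
    (∀ c : G.ConnectedComponent, CompIsCycleGe4OrPath G c) ∧
      (G.CliqueFree 3 ∧ (∀ v : V, G.degree v ≤ 2) ∧
       (∀ c : G.ConnectedComponent, ¬ Nonempty (G.induce c.supp ≃g cycleGraph 3))) := by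
  have htri : G.CliqueFree 3 := cliqueFree_three_of_not_connected hcoclaw hdisc
  have hG : G.MaxDegreeLeTwo := maxDegreeLeTwo_of_clawFree hclaw htri
  have htri_supp (c : G.ConnectedComponent) : (G.induce c.supp).CliqueFree 3 :=
    htri.comap (Embedding.induce _).isContained
  refine ⟨fun c => ?_, htri, fun v => hG.degree_le_two v, fun c ⟨e⟩ => ?_⟩
  · exact c.connected_toSimpleGraph.nonempty_iso_cycleGraph_or_pathGraph
      (hG.comap (Embedding.induce _)) (htri_supp c)
  · exact htri_supp c |>.comap e.isContained' {0, 1, 2}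
      (is3Clique_triple_iff.2 ⟨by decide, by decide, by decide⟩)
end

section
/- Let G be a finite simple graph that is claw-free and co-claw-free, and suppose G contains an induced subgraph isomorphic to the complement of A_6. Then G has exactly 6 vertices, i.e., G is isomorphic to the complement of A_6. -/
/-!
Let `f : A₆ᶜ ↪g G` and suppose some vertex `v` of `G` lies outside the image of `f`. Then `f`
extends to an induced embedding of the graph obtained from `A₆ᶜ` by adjoining one vertex
whose neighbourhood is `{w | v ~ f w}`. Whichever of the 64 possible neighbourhoods this is,
the new vertex lies in an induced claw or co-claw of the extended graph (a finite check), and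
hence so does `v` in `G`. So `f` is surjective, i.e. an isomorphism.
-/

open SimpleGraph

instance : DecidableRel A6.Adj := fun x y => decidable_of_iff' _ (fromRel_adj _ x y)

namespace SimpleGraph

variable {V W : Type*} {G : SimpleGraph V} {H : SimpleGraph W}

def addVertex (H : SimpleGraph W) (s : Set W) : SimpleGraph (Option W) where
  Adj
    | some a, some b => H.Adj a b
    | none, some b => b ∈ s
    | some a, none => a ∈ s
    | none, none => False
  symm := ⟨by rintro (_ | a) (_ | b) h <;> first | exact h | exact h.symm⟩
  loopless := ⟨by rintro (_ | a) h; exacts [h, H.loopless.irrefl a h]⟩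

instance (H : SimpleGraph W) [DecidableRel H.Adj] (s : Set W) [DecidablePred (· ∈ s)] :
    DecidableRel (H.addVertex s).Adj
  | some a, some b => inferInstanceAs (Decidable (H.Adj a b))
  | none, some b => inferInstanceAs (Decidable (b ∈ s))
  | some a, none => inferInstanceAs (Decidable (a ∈ s))
  | none, none => inferInstanceAs (Decidable False)

def Embedding.extend (f : H ↪g G) {v : V} (hv : v ∉ Set.range f) (s : Set W)
    (hs : ∀ w, w ∈ s ↔ G.Adj v (f w)) : H.addVertex s ↪g G where
  toFun o := o.elim v f
  inj' := by
    rintro (_ | a) (_ | b) hab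
    · rfl
    · exact (hv ⟨b, hab.symm⟩).elim
    · exact (hv ⟨a, hab⟩).elim
    · exact congrArg some (f.injective hab)
  map_rel_iff' := by
    rintro (_ | a) (_ | b)
    · exact iff_of_false (G.loopless.irrefl v) id
    · exact (hs b).symm
    · exact G.adj_comm _ _ |>.trans (hs a).symm
    · exact f.map_adj_iff

def IsClawAt (G : SimpleGraph V) (c a b d : V) : Prop :=
  G.Adj c a ∧ G.Adj c b ∧ G.Adj c d ∧ a ≠ b ∧ a ≠ d ∧ b ≠ d ∧
    ¬G.Adj a b ∧ ¬G.Adj a d ∧ ¬G.Adj b d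

instance [DecidableEq V] [DecidableRel G.Adj] (c a b d : V) : Decidable (G.IsClawAt c a b d) :=
  inferInstanceAs (Decidable (_ ∧ _))

theorem IsClawAt.nonempty_embedding {c a b d : V} (h : G.IsClawAt c a b d) :
    Nonempty (claw ↪g G) := by
  obtain ⟨hca, hcb, hcd, hab, had, hbd, nab, nad, nbd⟩ := h
  refine ⟨{ toFun := Sum.elim (fun _ => c) ![a, b, d], inj' := ?_, map_rel_iff' := ?_ }⟩
  · rintro (x | x) (y | y) hxy <;> fin_cases x <;> fin_cases y <;>
      simp_all [hca.ne, hcb.ne, hcd.ne, hca.ne', hcb.ne', hcd.ne']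
  · intro x y
    change G.Adj (Sum.elim _ _ x) (Sum.elim _ _ y) ↔ _
    rcases x with x | x <;> rcases y with y | y <;> fin_cases x <;> fin_cases y <;>
      simp_all [claw, G.adj_comm]

theorem IsClawAt.nonempty_compl_embedding {c a b d : V} (h : Gᶜ.IsClawAt c a b d) :
    Nonempty (clawᶜ ↪g G) := by
  simpa using h.nonempty_embedding.map Embedding.complEquiv

end SimpleGraph

-- `A₆ᶜ` itself has no induced claw or co-claw, so any such quadruple contains the new vertex.
theorem exists_isClawAt_addVertex_A6_compl (s : Finset (Fin 6)) : ∃ a b d : Fin 6,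
    ((A6ᶜ.addVertex s).IsClawAt none a b d ∨ (A6ᶜ.addVertex s).IsClawAt a b d none) ∨
    ((A6ᶜ.addVertex s)ᶜ.IsClawAt none a b d ∨ (A6ᶜ.addVertex s)ᶜ.IsClawAt a b d none) := by
  revert s
  decide +kernel

theorem surjective_of_A6_compl_embedding {V : Type*} {G : SimpleGraph V}
    (hclaw : ¬ Nonempty (claw ↪g G)) (hcoclaw : ¬ Nonempty (clawᶜ ↪g G)) (f : A6ᶜ ↪g G) :
    Function.Surjective f := by
  classical
  intro v
  by_contra hv
  set s := Finset.univ.filter fun w => G.Adj v (f w)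
  let g : A6ᶜ.addVertex s ↪g G := f.extend hv s (by simp [s])
  obtain ⟨a, b, d, (h | h) | (h | h)⟩ := exists_isClawAt_addVertex_A6_compl s
  exacts [hclaw (h.nonempty_embedding.map g.comp), hclaw (h.nonempty_embedding.map g.comp),
    hcoclaw (h.nonempty_compl_embedding.map g.comp),
    hcoclaw (h.nonempty_compl_embedding.map g.comp)]

/-- Step (3) of the proof of Theorem 1: a finite claw-free and co-claw-free graph containing
an induced copy of the complement of `A₆` has exactly 6 vertices, i.e. it is isomorphic to
the complement of `A₆`. -/
theorem stmt_12 {V : Type} [Fintype V] (G : SimpleGraph V)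
    (hclaw : ¬ Nonempty (claw ↪g G)) (hcoclaw : ¬ Nonempty (clawᶜ ↪g G))
    (h : Nonempty (A6ᶜ ↪g G)) :
    Fintype.card V = 6 ∧ Nonempty (G ≃g A6ᶜ) := by
  obtain ⟨f⟩ := h
  let e : A6ᶜ ≃g G := RelIso.ofSurjective f (surjective_of_A6_compl_embedding hclaw hcoclaw f)
  exact ⟨(Fintype.card_congr e.toEquiv).symm.trans (Fintype.card_fin 6), ⟨e.symm⟩⟩
end

section
/- If U is a bipartite simple graph, then the edge-graph S(complement of U) of the complement of U is bipartite. -/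
open SimpleGraph

/-- The edge-graph `S(U)`: vertices are edges of `U`; two edges `u = xy` and `v = xz`
(with `x, y, z` pairwise distinct) are adjacent iff `yz` is not an edge of `U`. -/
def edgeGraph {V : Type*} (U : SimpleGraph V) : SimpleGraph U.edgeSet where
  Adj u v := ∃ x y z : V, x ≠ y ∧ x ≠ z ∧ y ≠ z ∧
    (u : Sym2 V) = s(x, y) ∧ (v : Sym2 V) = s(x, z) ∧ ¬ U.Adj y z
  symm := by
    constructor
    rintro u v ⟨x, y, z, hxy, hxz, hyz, hu, hv, h⟩
    exact ⟨x, z, y, hxz, hxy, hyz.symm, hv, hu, fun h' => h h'.symm⟩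
  loopless := by
    constructor
    rintro u ⟨x, y, z, hxy, hxz, hyz, hu, hv, h⟩
    rw [hu, Sym2.eq_iff] at hv
    rcases hv with ⟨-, h1⟩ | ⟨h1, -⟩
    · exact hyz h1
    · exact hxz h1
/-- A graph is bipartite if its vertex set can be partitioned into two independent sets. -/
def IsBipartite {W : Type*} (H : SimpleGraph W) : Prop :=
  ∃ A B : Set W, A ∪ B = Set.univ ∧ A ∩ B = ∅ ∧
    (∀ x ∈ A, ∀ y ∈ A, ¬ H.Adj x y) ∧ (∀ x ∈ B, ∀ y ∈ B, ¬ H.Adj x y)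

namespace SimpleGraph

variable {V : Type*}

theorem isBipartite_iff_root_isBipartite (H : SimpleGraph V) :
    H.IsBipartite ↔ _root_.IsBipartite H := by
  rw [isBipartite_iff_exists_isBipartiteWith]
  constructor
  · rintro ⟨s, t, hst⟩
    refine ⟨s, sᶜ, Set.union_compl_self s, Set.inter_compl_self s, ?_, ?_⟩
    · exact fun x hx y hy hxy => Set.disjoint_left.mp hst.disjoint hy (hst.mem_of_mem_adj hx hxy)
    · intro x hx y hy hxy
      rcases hst.mem_of_adj hxy with ⟨hxs, -⟩ | ⟨-, hys⟩
      exacts [hx hxs, hy hys]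
  · rintro ⟨A, B, hAB, hA_inter_B, hA, hB⟩
    refine ⟨A, B, Set.disjoint_iff_inter_eq_empty.mpr hA_inter_B, fun x y hxy => ?_⟩
    have side (v : V) : v ∈ A ∨ v ∈ B := by simp [← Set.mem_union, hAB]
    rcases side x with hx | hx <;> rcases side y with hy | hy
    exacts [(hA x hx y hy hxy).elim, .inl ⟨hx, hy⟩, .inr ⟨hx, hy⟩, (hB x hx y hy hxy).elim]

variable {α : Type*} [AddCancelCommMonoid α] {W : SimpleGraph V}

/-- Colours the edge `xy` by `c x + c y`. Edges `xy`, `xz` adjacent in `edgeGraph W` have `yz` an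
edge of `Wᶜ`, so `c y ≠ c z` and cancelling `c x` separates their colours. -/
def Coloring.edgeGraph (c : Wᶜ.Coloring α) : (_root_.edgeGraph W).Coloring α :=
  Coloring.mk (fun e => Sym2.lift ⟨fun x y => c x + c y, fun _ _ => add_comm _ _⟩ e.1) <| by
    rintro u v ⟨x, y, z, -, -, hyz, hu, hv, hWyz⟩
    rw [hu, hv, Sym2.lift_mk, Sym2.lift_mk, Ne, add_right_inj]
    exact c.valid ((compl_adj W y z).mpr ⟨hyz, hWyz⟩)

theorem Colorable.edgeGraph {n : ℕ} [NeZero n] (h : Wᶜ.Colorable n) :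
    (_root_.edgeGraph W).Colorable n :=
  let ⟨c⟩ := h; ⟨c.edgeGraph⟩

end SimpleGraph

/-- If `U` is bipartite, then the edge-graph of the complement of `U` is bipartite. -/
theorem stmt_17 {V : Type*} (U : SimpleGraph V) (h : _root_.IsBipartite U) :
    _root_.IsBipartite (edgeGraph Uᶜ) := by
  rw [← SimpleGraph.isBipartite_iff_root_isBipartite] at h ⊢
  exact SimpleGraph.Colorable.edgeGraph (by rwa [compl_compl])
end
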